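/- arXiv:1912.08294 — 5 statements merged into one kernel-verified Lean document; each statement's English description precedes it below -/
import Mathlib

section
/- Let x, y ∈ C^n and let A ∈ C^{m×n} be an ε-JL embedding of the four vectors {x - y, x + y, x - iy, x + iy}. Then |⟨Ax, Ay⟩ - ⟨x, y⟩| ≤ 2ε(‖x‖₂² + ‖y‖₂²) ≤ 4ε · max{‖x‖₂², ‖y‖₂²}. -/
open scoped BigOperators
open Complex Finset

/-- Squared Euclidean norm of a vector in `ℂ^n`. -/
noncomputable def nsq {n : ℕ} (x : Fin n → ℂ) : ℝ := ∑ i, ‖x i‖ ^ 2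

lemma nsq_eqC {n : ℕ} (w : Fin n → ℂ) :
    ((nsq w : ℝ) : ℂ) = ∑ i, w i * (starRingEnd ℂ) (w i) := by
  rw [nsq, Complex.ofReal_sum]
  exact Finset.sum_congr rfl fun i _ => by
    rw [Complex.mul_conj, Complex.normSq_eq_norm_sq]

lemma nsq_nonneg {n : ℕ} (w : Fin n → ℂ) : 0 ≤ nsq w :=
  Finset.sum_nonneg fun i _ => by positivity

/-- Euclidean inner product `⟨x, y⟩ = Σ_i x_i conj(y_i)` on `ℂ^n`. -/
noncomputable def ip {n : ℕ} (x y : Fin n → ℂ) : ℂ := ∑ i, x i * (starRingEnd ℂ) (y i)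

lemma polar {n : ℕ} (u v : Fin n → ℂ) :
    ip u v = (4:ℂ)⁻¹ * (((nsq (u + v) - nsq (u - v) : ℝ) : ℂ)
      + Complex.I * ((nsq (u + Complex.I • v) - nsq (u - Complex.I • v) : ℝ) : ℂ)) := by
  simp only [Complex.ofReal_sub, nsq_eqC, ip, Pi.add_apply, Pi.sub_apply, Pi.smul_apply,
    smul_eq_mul, map_add, map_sub, map_mul, Complex.conj_I]
  rw [← Finset.sum_sub_distrib, ← Finset.sum_sub_distrib, Finset.mul_sum,
    ← Finset.sum_add_distrib, Finset.mul_sum]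
  exact Finset.sum_congr rfl fun i _ => by
    linear_combination ((u i * (starRingEnd ℂ) (v i) - v i * (starRingEnd ℂ) (u i)) / 2) * Complex.I_sq

lemma parallel1 {n : ℕ} (u v : Fin n → ℂ) :
    nsq (u + v) + nsq (u - v) = 2 * (nsq u + nsq v) := by
  have h : ((nsq (u + v) + nsq (u - v) : ℝ) : ℂ) = ((2 * (nsq u + nsq v) : ℝ) : ℂ) := by
    push_cast [nsq_eqC]
    simp only [Pi.add_apply, Pi.sub_apply, map_add, map_sub]
    rw [← Finset.sum_add_distrib, ← Finset.sum_add_distrib, Finset.mul_sum]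
    exact Finset.sum_congr rfl fun i _ => by ring
  exact_mod_cast h

lemma parallel2 {n : ℕ} (u v : Fin n → ℂ) :
    nsq (u + Complex.I • v) + nsq (u - Complex.I • v) = 2 * (nsq u + nsq v) := by
  have h : ((nsq (u + Complex.I • v) + nsq (u - Complex.I • v) : ℝ) : ℂ)
      = ((2 * (nsq u + nsq v) : ℝ) : ℂ) := by
    push_cast [nsq_eqC]
    simp only [Pi.add_apply, Pi.sub_apply, Pi.smul_apply, smul_eq_mul, map_add, map_sub,
      map_mul, Complex.conj_I]
    rw [← Finset.sum_add_distrib, ← Finset.sum_add_distrib, Finset.mul_sum]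
    exact Finset.sum_congr rfl fun i _ => by
      linear_combination (-2 * v i * (starRingEnd ℂ) (v i)) * Complex.I_sq
  exact_mod_cast h

/-- `A` is an `ε`-JL embedding of `S ⊆ ℂ^n`: `‖Ax‖₂² = (1 + ε_x)‖x‖₂²` for some
`ε_x ∈ (-ε, ε)`, for every `x ∈ S`. -/
def IsJL {m n : ℕ} (ε : ℝ) (A : Matrix (Fin m) (Fin n) ℂ) (S : Set (Fin n → ℂ)) : Prop :=
  ∀ x ∈ S, ∃ e ∈ Set.Ioo (-ε) ε, nsq (A.mulVec x) = (1 + e) * nsq x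

/-- If `A` is an `ε`-JL embedding of `{x - y, x + y, x - iy, x + iy}`, then
`|⟨Ax, Ay⟩ - ⟨x, y⟩| ≤ 2ε(‖x‖₂² + ‖y‖₂²) ≤ 4ε·max{‖x‖₂², ‖y‖₂²}`. -/
theorem jl_preserves_inner {m n : ℕ} {ε : ℝ} (hε : ε ∈ Set.Ioo (0 : ℝ) 1)
    (x y : Fin n → ℂ) (A : Matrix (Fin m) (Fin n) ℂ)
    (hA : IsJL ε A {x - y, x + y, x - Complex.I • y, x + Complex.I • y}) :
    ‖ip (A.mulVec x) (A.mulVec y) - ip x y‖ ≤ 2 * ε * (nsq x + nsq y) ∧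
    2 * ε * (nsq x + nsq y) ≤ 4 * ε * max (nsq x) (nsq y) := by
  obtain ⟨hε0, hε1⟩ := hε
  obtain ⟨e1, he1, h1⟩ := hA (x + y) (by simp [Set.mem_insert_iff])
  obtain ⟨e2, he2, h2⟩ := hA (x - y) (by simp [Set.mem_insert_iff])
  obtain ⟨e3, he3, h3⟩ := hA (x + Complex.I • y) (by simp [Set.mem_insert_iff])
  obtain ⟨e4, he4, h4⟩ := hA (x - Complex.I • y) (by simp [Set.mem_insert_iff])
  set s1 := nsq (x + y); set s2 := nsq (x - y)
  set s3 := nsq (x + Complex.I • y); set s4 := nsq (x - Complex.I • y)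
  have hmv1 : A.mulVec x + A.mulVec y = A.mulVec (x + y) := (Matrix.mulVec_add A x y).symm
  have hmv2 : A.mulVec x - A.mulVec y = A.mulVec (x - y) := (Matrix.mulVec_sub A x y).symm
  have hmvI : Complex.I • A.mulVec y = A.mulVec (Complex.I • y) := (Matrix.mulVec_smul A Complex.I y).symm
  have hmv3 : A.mulVec x + Complex.I • A.mulVec y = A.mulVec (x + Complex.I • y) := by
    rw [hmvI, ← Matrix.mulVec_add]
  have hmv4 : A.mulVec x - Complex.I • A.mulVec y = A.mulVec (x - Complex.I • y) := by
    rw [hmvI, ← Matrix.mulVec_sub]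
  have key : ip (A.mulVec x) (A.mulVec y) - ip x y
      = (4:ℂ)⁻¹ * (((e1 * s1 - e2 * s2 : ℝ) : ℂ)
        + Complex.I * ((e3 * s3 - e4 * s4 : ℝ) : ℂ)) := by
    rw [polar (A.mulVec x) (A.mulVec y), polar x y, hmv1, hmv2, hmv3, hmv4, h1, h2, h3, h4]
    push_cast
    ring
  have habs : ‖ip (A.mulVec x) (A.mulVec y) - ip x y‖
      ≤ (4:ℝ)⁻¹ * (|e1 * s1 - e2 * s2| + |e3 * s3 - e4 * s4|) := by
    rw [key]
    set a := (e1 * s1 - e2 * s2 : ℝ); set b := (e3 * s3 - e4 * s4 : ℝ)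
    have hz : ((a : ℂ) + Complex.I * (b : ℂ)) = Complex.mk a b := by
      apply Complex.ext <;> simp
    rw [norm_mul, hz]
    have : ‖Complex.mk a b‖ ≤ |a| + |b| := by
      simpa using Complex.norm_le_abs_re_add_abs_im (Complex.mk a b)
    calc ‖(4:ℂ)⁻¹‖ * ‖Complex.mk a b‖ ≤ ‖(4:ℂ)⁻¹‖ * (|a| + |b|) := by
          exact mul_le_mul_of_nonneg_left this (norm_nonneg _)
      _ = (4:ℝ)⁻¹ * (|a| + |b|) := by norm_num
  have hs1 : 0 ≤ s1 := nsq_nonneg _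
  have hs2 : 0 ≤ s2 := nsq_nonneg _
  have hs3 : 0 ≤ s3 := nsq_nonneg _
  have hs4 : 0 ≤ s4 := nsq_nonneg _
  have hp1 : s1 + s2 = 2 * (nsq x + nsq y) := by
    have := parallel1 x y; rw [add_comm s1 s2]; rw [← this]; ring
  have hp2 : s3 + s4 = 2 * (nsq x + nsq y) := parallel2 x y
  obtain ⟨he1l, he1r⟩ := he1; obtain ⟨he2l, he2r⟩ := he2
  obtain ⟨he3l, he3r⟩ := he3; obtain ⟨he4l, he4r⟩ := he4
  constructor
  · refine habs.trans ?_
    have hE1 : |e1| ≤ ε := le_of_lt (abs_lt.2 ⟨he1l, he1r⟩)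
    have hE2 : |e2| ≤ ε := le_of_lt (abs_lt.2 ⟨he2l, he2r⟩)
    have hE3 : |e3| ≤ ε := le_of_lt (abs_lt.2 ⟨he3l, he3r⟩)
    have hE4 : |e4| ≤ ε := le_of_lt (abs_lt.2 ⟨he4l, he4r⟩)
    have ha : |e1 * s1 - e2 * s2| ≤ ε * (s1 + s2) := by
      calc |e1 * s1 - e2 * s2| ≤ |e1 * s1| + |e2 * s2| := by
            rw [sub_eq_add_neg]; exact (abs_add_le _ _).trans (by rw [abs_neg])
        _ = |e1| * s1 + |e2| * s2 := by
            rw [abs_mul, abs_mul, _root_.abs_of_nonneg hs1, _root_.abs_of_nonneg hs2]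
        _ ≤ ε * s1 + ε * s2 :=
            add_le_add (mul_le_mul_of_nonneg_right hE1 hs1) (mul_le_mul_of_nonneg_right hE2 hs2)
        _ = ε * (s1 + s2) := by ring
    have hb : |e3 * s3 - e4 * s4| ≤ ε * (s3 + s4) := by
      calc |e3 * s3 - e4 * s4| ≤ |e3 * s3| + |e4 * s4| := by
            rw [sub_eq_add_neg]; exact (abs_add_le _ _).trans (by rw [abs_neg])
        _ = |e3| * s3 + |e4| * s4 := by
            rw [abs_mul, abs_mul, _root_.abs_of_nonneg hs3, _root_.abs_of_nonneg hs4]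
        _ ≤ ε * s3 + ε * s4 :=
            add_le_add (mul_le_mul_of_nonneg_right hE3 hs3) (mul_le_mul_of_nonneg_right hE4 hs4)
        _ = ε * (s3 + s4) := by ring
    have hS : 0 ≤ nsq x + nsq y := add_nonneg (nsq_nonneg x) (nsq_nonneg y)
    have hεS : 0 ≤ ε * (nsq x + nsq y) := mul_nonneg hε0.le hS
    calc (4:ℝ)⁻¹ * (|e1 * s1 - e2 * s2| + |e3 * s3 - e4 * s4|)
        ≤ (4:ℝ)⁻¹ * (ε * (s1 + s2) + ε * (s3 + s4)) := by
          apply mul_le_mul_of_nonneg_left (add_le_add ha hb); norm_num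
      _ = ε * (nsq x + nsq y) := by rw [hp1, hp2]; ring
      _ ≤ 2 * ε * (nsq x + nsq y) := by linarith
  · have hx := le_max_left (nsq x) (nsq y)
    have hy := le_max_right (nsq x) (nsq y)
    nlinarith
end

section
/- Fix ε ∈ (0,1). Let L be an r-dimensional subspace of C^n and let C ⊂ L be an (ε/16)-net of the unit sphere of L (in the Euclidean norm). If a matrix A ∈ C^{m×n} is an (ε/2)-JL embedding of C, then (1-ε)‖x‖₂² ≤ ‖Ax‖₂² ≤ (1+ε)‖x‖₂² holds for all x ∈ L. -/
open scoped BigOperators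

/-!
Let `M` be the operator norm of `A` on `L` for the Euclidean norms. Writing a unit vector
`x ∈ L` as `c + (x - c)` with `c` in the net gives `‖Ax‖ ≤ √(1 + ε/2) + M ε/16`, hence
`M ≤ √(1 + ε/2) / (1 - ε/16) ≤ √(1 + ε)`; symmetrically
`‖Ax‖ ≥ √(1 - ε/2) - M ε/16 ≥ √(1 - ε)`.
Both bounds pass from the unit sphere to all of `L` by homogeneity.
-/

theorem sqrt_one_add_half_div_le {ε : ℝ} (hε : ε ∈ Set.Ioo 0 1) :
    √(1 + ε / 2) / (1 - ε / 16) ≤ √(1 + ε) := by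
  obtain ⟨hε0, hε1⟩ := hε
  rw [div_le_iff₀ (by linarith),
    Real.sqrt_le_left (mul_nonneg (Real.sqrt_nonneg _) (by linarith)), mul_pow,
    Real.sq_sqrt (by linarith)]
  nlinarith [mul_pos hε0 hε0, mul_pos (mul_pos hε0 hε0) hε0]

theorem sqrt_one_sub_le_sqrt_one_sub_half_sub {ε : ℝ} (hε : ε ∈ Set.Ioo 0 1) :
    √(1 - ε) ≤ √(1 - ε / 2) - √(1 + ε) * (ε / 16) := by
  obtain ⟨hε0, hε1⟩ := hε
  set s := √(1 - ε / 2)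
  set u := √(1 - ε)
  have hs : s ^ 2 = 1 - ε / 2 := Real.sq_sqrt (by linarith)
  have hu : u ^ 2 = 1 - ε := Real.sq_sqrt (by linarith)
  have hs1 : s ≤ 1 := Real.sqrt_le_one.mpr (by linarith)
  have hu1 : u ≤ 1 := Real.sqrt_le_one.mpr (by linarith)
  have ht2 : √(1 + ε) ≤ 2 := (Real.sqrt_le_left zero_le_two).mpr (by linarith)
  have hus : u ≤ s := Real.sqrt_le_sqrt (by linarith)
  -- `(s - u) * (s + u) = ε / 2` with `s + u ≤ 2`
  have hsu : ε / 4 ≤ s - u := by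
    nlinarith [mul_nonneg (sub_nonneg.2 hus) (by linarith : (0 : ℝ) ≤ 2 - (s + u))]
  nlinarith

namespace ContinuousLinearMap

variable {𝕜 E F : Type*} [RCLike 𝕜] [NormedAddCommGroup E] [NormedSpace 𝕜 E]
  [NormedAddCommGroup F] [NormedSpace 𝕜 F] (f : E →L[𝕜] F) {C : Set E} {δ : ℝ}

theorem exists_mem_abs_norm_apply_sub_le_of_net
    (hnet : ∀ x : E, ‖x‖ = 1 → ∃ c ∈ C, ‖x - c‖ ≤ δ) {x : E} (hx : ‖x‖ = 1) :
    ∃ c ∈ C, |‖f x‖ - ‖f c‖| ≤ ‖f‖ * δ := by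
  obtain ⟨c, hc, hxc⟩ := hnet x hx
  refine ⟨c, hc, ?_⟩
  calc |‖f x‖ - ‖f c‖| ≤ ‖f x - f c‖ := abs_norm_sub_norm_le _ _
    _ = ‖f (x - c)‖ := by rw [map_sub]
    _ ≤ ‖f‖ * ‖x - c‖ := f.le_opNorm _
    _ ≤ ‖f‖ * δ := by gcongr

theorem opNorm_le_of_net (hnet : ∀ x : E, ‖x‖ = 1 → ∃ c ∈ C, ‖x - c‖ ≤ δ)
    (hδ : δ ∈ Set.Ico 0 1) {a : ℝ} (ha : 0 ≤ a) (hC : ∀ c ∈ C, ‖f c‖ ≤ a) :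
    ‖f‖ ≤ a / (1 - δ) := by
  have h : ‖f‖ ≤ a + ‖f‖ * δ :=
    opNorm_le_of_unit_norm (add_nonneg ha (mul_nonneg f.opNorm_nonneg hδ.1)) fun x hx => by
      obtain ⟨c, hc, hxc⟩ := f.exists_mem_abs_norm_apply_sub_le_of_net hnet hx
      linarith [(abs_le.mp hxc).2, hC c hc]
  rw [le_div_iff₀ (by linarith [hδ.2])]
  linarith

theorem le_norm_apply_of_net (hnet : ∀ x : E, ‖x‖ = 1 → ∃ c ∈ C, ‖x - c‖ ≤ δ)
    {b : ℝ} (hC : ∀ c ∈ C, b ≤ ‖f c‖) {x : E} (hx : ‖x‖ = 1) :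
    b - ‖f‖ * δ ≤ ‖f x‖ := by
  obtain ⟨c, hc, hxc⟩ := f.exists_mem_abs_norm_apply_sub_le_of_net hnet hx
  linarith [(abs_le.mp hxc).1, hC c hc]

theorem mul_norm_le_norm_apply_of_unit_norm {b : ℝ}
    (hf : ∀ x : E, ‖x‖ = 1 → b ≤ ‖f x‖) (x : E) : b * ‖x‖ ≤ ‖f x‖ := by
  rcases eq_or_ne x 0 with rfl | hx
  · simp
  · have hx' : 0 < ‖x‖ := norm_pos_iff.mpr hx
    have h := hf _ (norm_smul_inv_norm (𝕜 := 𝕜) hx)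
    rw [map_smul, norm_smul, norm_inv, RCLike.norm_ofReal, abs_norm, inv_mul_eq_div,
      le_div_iff₀ hx'] at h
    exact h

theorem sq_norm_apply_mem_of_net {ε : ℝ} (hε : ε ∈ Set.Ioo 0 1)
    (hnet : ∀ x : E, ‖x‖ = 1 → ∃ c ∈ C, ‖x - c‖ ≤ ε / 16)
    (hC : ∀ c ∈ C, ‖f c‖ ^ 2 ∈ Set.Icc (1 - ε / 2) (1 + ε / 2)) (x : E) :
    (1 - ε) * ‖x‖ ^ 2 ≤ ‖f x‖ ^ 2 ∧ ‖f x‖ ^ 2 ≤ (1 + ε) * ‖x‖ ^ 2 := by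
  have hC_le (c) (hc : c ∈ C) : ‖f c‖ ≤ √(1 + ε / 2) :=
    Real.le_sqrt_of_sq_le (hC c hc).2
  have hC_ge (c) (hc : c ∈ C) : √(1 - ε / 2) ≤ ‖f c‖ :=
    (Real.sqrt_le_left (norm_nonneg _)).mpr (hC c hc).1
  have hf : ‖f‖ ≤ √(1 + ε) :=
    (f.opNorm_le_of_net hnet ⟨by linarith [hε.1], by linarith [hε.2]⟩ (Real.sqrt_nonneg _)
      hC_le).trans (sqrt_one_add_half_div_le hε)
  have hlower : √(1 - ε) * ‖x‖ ≤ ‖f x‖ :=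
    f.mul_norm_le_norm_apply_of_unit_norm (fun y hy => calc
      √(1 - ε) ≤ √(1 - ε / 2) - √(1 + ε) * (ε / 16) :=
        sqrt_one_sub_le_sqrt_one_sub_half_sub hε
      _ ≤ √(1 - ε / 2) - ‖f‖ * (ε / 16) := by gcongr; linarith [hε.1]
      _ ≤ ‖f y‖ := f.le_norm_apply_of_net hnet hC_ge hy) x
  constructor
  · calc (1 - ε) * ‖x‖ ^ 2 = (√(1 - ε) * ‖x‖) ^ 2 := by
          rw [mul_pow, Real.sq_sqrt (by linarith [hε.2])]
      _ ≤ ‖f x‖ ^ 2 := by gcongr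
  · calc ‖f x‖ ^ 2 ≤ (√(1 + ε) * ‖x‖) ^ 2 := by
          gcongr
          exact f.le_of_opNorm_le hf x
      _ = (1 + ε) * ‖x‖ ^ 2 := by rw [mul_pow, Real.sq_sqrt (by linarith [hε.1])]

end ContinuousLinearMap

theorem nsq_eq_norm_toLp_sq {n : ℕ} (x : Fin n → ℂ) : nsq x = ‖WithLp.toLp 2 x‖ ^ 2 := by
  rw [EuclideanSpace.norm_sq_eq]
  rfl

theorem jl_net_subspace_embedding_general {m n : ℕ} {ε : ℝ} (hε : ε ∈ Set.Ioo (0 : ℝ) 1)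
    (L : Submodule ℂ (Fin n → ℂ))
    (C : Set (Fin n → ℂ)) (hCL : C ⊆ {x | x ∈ L ∧ nsq x = 1})
    (hnet : ∀ x ∈ L, nsq x = 1 → ∃ c ∈ C, Real.sqrt (nsq (x - c)) ≤ ε / 16)
    (A : Matrix (Fin m) (Fin n) ℂ) (hA : IsJL (ε / 2) A C) :
    ∀ x ∈ L, (1 - ε) * nsq x ≤ nsq (A.mulVec x) ∧ nsq (A.mulVec x) ≤ (1 + ε) * nsq x := by
  -- `Fin n → ℂ` carries the sup norm; in `EuclideanSpace`, `nsq` is the squared norm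
  let E : Submodule ℂ (EuclideanSpace ℂ (Fin n)) :=
    L.comap (WithLp.linearEquiv 2 ℂ (Fin n → ℂ)).toLinearMap
  let f : E →L[ℂ] EuclideanSpace ℂ (Fin m) :=
    LinearMap.toContinuousLinearMap (Matrix.toEuclideanLin A ∘ₗ E.subtype)
  have hnorm (u : E) : ‖u‖ ^ 2 = nsq (u : EuclideanSpace ℂ (Fin n)).ofLp :=
    (nsq_eq_norm_toLp_sq _).symm
  have hf (u : E) : ‖f u‖ ^ 2 = nsq (A.mulVec (u : EuclideanSpace ℂ (Fin n)).ofLp) :=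
    (nsq_eq_norm_toLp_sq _).symm
  let C' : Set E := {c | (c : EuclideanSpace ℂ (Fin n)).ofLp ∈ C}
  have hnet' (u : E) (hu : ‖u‖ = 1) : ∃ c ∈ C', ‖u - c‖ ≤ ε / 16 := by
    obtain ⟨c, hc, hdist⟩ :=
      hnet (u : EuclideanSpace ℂ (Fin n)).ofLp u.2 (by rw [← hnorm, hu, one_pow])
    refine ⟨⟨WithLp.toLp 2 c, (hCL hc).1⟩, hc, ?_⟩
    rwa [nsq_eq_norm_toLp_sq, Real.sqrt_sq (norm_nonneg _)] at hdist
  have hC' (c : E) (hc : c ∈ C') : ‖f c‖ ^ 2 ∈ Set.Icc (1 - ε / 2) (1 + ε / 2) := by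
    obtain ⟨e, ⟨he₁, he₂⟩, hAc⟩ := hA _ hc
    rw [hf, hAc, (hCL hc).2, mul_one]
    exact ⟨by linarith, by linarith⟩
  intro x hx
  simpa only [hf, hnorm] using f.sq_norm_apply_mem_of_net hε hnet' hC' ⟨WithLp.toLp 2 x, hx⟩

/-- If `C` is an `(ε/16)`-net of the Euclidean unit sphere of an `r`-dimensional subspace
`L ⊆ ℂ^n` and `A` is an `(ε/2)`-JL embedding of `C`, then
`(1-ε)‖x‖₂² ≤ ‖Ax‖₂² ≤ (1+ε)‖x‖₂²` for all `x ∈ L`. -/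
theorem jl_net_subspace_embedding {m n r : ℕ} {ε : ℝ} (hε : ε ∈ Set.Ioo (0 : ℝ) 1)
    (L : Submodule ℂ (Fin n → ℂ)) (hr : Module.finrank ℂ L = r)
    (C : Set (Fin n → ℂ)) (hCL : C ⊆ {x | x ∈ L ∧ nsq x = 1})
    (hnet : ∀ x ∈ L, nsq x = 1 → ∃ c ∈ C, Real.sqrt (nsq (x - c)) ≤ ε / 16)
    (A : Matrix (Fin m) (Fin n) ℂ) (hA : IsJL (ε / 2) A C) :
    ∀ x ∈ L, (1 - ε) * nsq x ≤ nsq (A.mulVec x) ∧ nsq (A.mulVec x) ≤ (1 + ε) * nsq x :=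
  jl_net_subspace_embedding_general hε L C hCL hnet A hA
end

section
/- Fix ε ∈ (0,1) and let L be an r-dimensional subspace of the tensor space C^{n1×...×nd} spanned by r orthonormal tensors T_1, ..., T_r. If a linear map L₀ into C^{m1×...×m_{d'}} is an (ε/4r)-JL embedding of the 2r² - r tensors consisting of {T_k - T_h, T_k + T_h, T_k - iT_h, T_k + iT_h : 1 ≤ h < k ≤ r} together with {T_k : k ∈ [r]}, then |‖L₀(X)‖² - ‖X‖²| ≤ ε‖X‖² holds for all X ∈ L. -/
/-! Write `ε' = ε / (4r)`. The Gram matrix of the `L₀ T_k` differs from the identity by at most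
`2ε'` in every entry: on the diagonal because `L₀` is an `ε'`-JL embedding of each `T_k`, off the
diagonal by the polarization identity, since `⟪L₀ T_k, L₀ T_h⟫` is a combination of the squared
norms of `L₀ (T_k ± T_h)` and `L₀ (T_k ± i T_h)`, each within `2ε'` of `2`. For `X = ∑ c_k T_k`
this gives `|‖L₀ X‖² - ‖X‖²| ≤ 2ε' (∑ |c_k|)² ≤ 2ε' r ∑ |c_k|² = ε ‖X‖² / 2` by Cauchy–Schwarz. -/

open scoped BigOperators

/-- Squared Euclidean (Frobenius) norm of a tensor. -/
noncomputable def tnsq {ι : Type*} [Fintype ι] (X : ι → ℂ) : ℝ := ∑ i, ‖X i‖ ^ 2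

/-- Tensor inner product `⟨X, Y⟩ = Σ X_i conj(Y_i)`. -/
noncomputable def ttip {ι : Type*} [Fintype ι] (X Y : ι → ℂ) : ℂ :=
  ∑ i, X i * (starRingEnd ℂ) (Y i)

/-- A linear map `L₀` between tensor spaces is an `ε`-JL embedding of a set `S` of tensors
if `‖L₀(X)‖² = (1 + ε_X)‖X‖²` with `ε_X ∈ (-ε, ε)` for all `X ∈ S`. -/
def IsJLmap {ι κ : Type*} [Fintype ι] [Fintype κ] (ε : ℝ)
    (L₀ : (ι → ℂ) →ₗ[ℂ] (κ → ℂ)) (S : Set (ι → ℂ)) : Prop :=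
  ∀ X ∈ S, ∃ e ∈ Set.Ioo (-ε) ε, tnsq (L₀ X) = (1 + e) * tnsq X

open scoped InnerProductSpace ComplexConjugate

section PolarizationSet

variable {ι E : Type*} [LT ι] [AddCommGroup E] [Module ℂ E]

def polarizationSet (v : ι → E) : Set E :=
  {Z | ∃ k h : ι, h < k ∧
    (Z = v k - v h ∨ Z = v k + v h ∨ Z = v k - Complex.I • v h ∨ Z = v k + Complex.I • v h)} ∪
  Set.range v

lemma polarizationSet_comp {E' : Type*} [AddCommGroup E'] [Module ℂ E'] (f : E →ₗ[ℂ] E')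
    (v : ι → E) : polarizationSet (f ∘ v) = f '' polarizationSet v := by
  ext z
  simp only [polarizationSet, Set.image_union, ← Set.range_comp, Set.mem_union, Set.mem_ofPred_eq,
    Set.mem_image, Function.comp_apply]
  constructor
  · rintro (⟨k, h, hhk, rfl | rfl | rfl | rfl⟩ | hz)
    · exact Or.inl ⟨_, ⟨k, h, hhk, Or.inl rfl⟩, map_sub f _ _⟩
    · exact Or.inl ⟨_, ⟨k, h, hhk, Or.inr (Or.inl rfl)⟩, map_add f _ _⟩
    · exact Or.inl ⟨_, ⟨k, h, hhk, Or.inr (Or.inr (Or.inl rfl))⟩, by simp⟩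
    · exact Or.inl ⟨_, ⟨k, h, hhk, Or.inr (Or.inr (Or.inr rfl))⟩, by simp⟩
    · exact Or.inr hz
  · rintro (⟨_, ⟨k, h, hhk, rfl | rfl | rfl | rfl⟩, rfl⟩ | hz)
    all_goals first | exact Or.inr hz | refine Or.inl ⟨k, h, hhk, ?_⟩; simp

end PolarizationSet

section InnerProductSpace

variable {ι E F : Type*} [NormedAddCommGroup E] [InnerProductSpace ℂ E]
  [NormedAddCommGroup F] [InnerProductSpace ℂ F]

lemma norm_inner_le_of_polarization {x y : F} {c η : ℝ}
    (h₁ : |‖x + y‖ ^ 2 - c| ≤ η) (h₂ : |‖x - y‖ ^ 2 - c| ≤ η)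
    (h₃ : |‖x - Complex.I • y‖ ^ 2 - c| ≤ η) (h₄ : |‖x + Complex.I • y‖ ^ 2 - c| ≤ η) :
    ‖⟪x, y⟫_ℂ‖ ≤ η := by
  set a := ‖x + y‖ ^ 2 - ‖x - y‖ ^ 2
  set b := ‖x - Complex.I • y‖ ^ 2 - ‖x + Complex.I • y‖ ^ 2
  have hpol : ⟪x, y⟫_ℂ = (a + b * Complex.I) / 4 := by
    rw [inner_eq_sum_norm_sq_div_four, RCLike.I_to_complex]
    simp only [a, b]
    push_cast
    rfl
  have ha : |a| ≤ 2 * η := by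
    linarith [abs_sub_le (‖x + y‖ ^ 2) c (‖x - y‖ ^ 2), abs_sub_comm c (‖x - y‖ ^ 2)]
  have hb : |b| ≤ 2 * η := by
    linarith [abs_sub_le (‖x - Complex.I • y‖ ^ 2) c (‖x + Complex.I • y‖ ^ 2),
      abs_sub_comm c (‖x + Complex.I • y‖ ^ 2)]
  calc ‖⟪x, y⟫_ℂ‖ = ‖(a + b * Complex.I : ℂ)‖ / 4 := by rw [hpol, norm_div, Complex.norm_ofNat]
    _ ≤ (|a| + |b|) / 4 := by
        gcongr
        refine (norm_add_le _ _).trans_eq ?_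
        rw [norm_mul, Complex.norm_I, mul_one, Complex.norm_real, Complex.norm_real,
          Real.norm_eq_abs, Real.norm_eq_abs]
    _ ≤ η := by linarith

lemma Orthonormal.norm_add_smul_sq {v : ι → E} (hv : Orthonormal ℂ v) {i j : ι}
    (hij : i ≠ j) {a : ℂ} (ha : ‖a‖ = 1) : ‖v i + a • v j‖ ^ 2 = 2 := by
  rw [@norm_add_sq ℂ, inner_smul_right, hv.inner_eq_zero hij, norm_smul, ha, hv.norm_eq_one,
    hv.norm_eq_one]
  norm_num

lemma norm_sum_smul_sq [Fintype ι] (c : ι → ℂ) (u : ι → F) :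
    ‖∑ i, c i • u i‖ ^ 2 = (∑ i, ∑ j, conj (c i) * c j * ⟪u i, u j⟫_ℂ).re := by
  rw [← @inner_self_eq_norm_sq ℂ, sum_inner]
  simp_rw [inner_smul_left, inner_sum, inner_smul_right, Finset.mul_sum, mul_assoc]
  rfl

lemma Orthonormal.norm_sum_smul_sq [Fintype ι] {v : ι → E} (hv : Orthonormal ℂ v)
    (c : ι → ℂ) : ‖∑ i, c i • v i‖ ^ 2 = ∑ i, ‖c i‖ ^ 2 := by
  rw [← @inner_self_eq_norm_sq ℂ, hv.inner_sum]
  simp [Complex.conj_mul', ← Complex.ofReal_pow]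

variable (L : E →ₗ[ℂ] F) {δ : ℝ}

lemma norm_inner_map_le_of_lt [Preorder ι] {v : ι → E} (hv : Orthonormal ℂ v)
    (hS : ∀ z ∈ polarizationSet v, |‖L z‖ ^ 2 - ‖z‖ ^ 2| ≤ δ * ‖z‖ ^ 2) {k h : ι}
    (hhk : h < k) : ‖⟪L (v k), L (v h)⟫_ℂ‖ ≤ 2 * δ := by
  have hpair : ∀ a : ℂ, ‖a‖ = 1 → v k + a • v h ∈ polarizationSet v →
      |‖L (v k) + a • L (v h)‖ ^ 2 - 2| ≤ 2 * δ := by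
    intro a ha hmem
    have := hS _ hmem
    rwa [hv.norm_add_smul_sq hhk.ne' ha, map_add, map_smul, mul_comm] at this
  have hmem : ∀ z, (z = v k - v h ∨ z = v k + v h ∨ z = v k - Complex.I • v h ∨
      z = v k + Complex.I • v h) → z ∈ polarizationSet v := fun z hz => Or.inl ⟨k, h, hhk, hz⟩
  refine norm_inner_le_of_polarization (c := 2) ?_ ?_ ?_ ?_
  · simpa using hpair 1 (by simp) (hmem _ (by simp))
  · simpa [← sub_eq_add_neg] using hpair (-1) (by simp) (hmem _ (by simp [← sub_eq_add_neg]))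
  · simpa [← sub_eq_add_neg] using
      hpair (-Complex.I) (by simp) (hmem _ (by simp [← sub_eq_add_neg]))
  · simpa using hpair Complex.I (by simp) (hmem _ (by simp))

lemma norm_inner_map_sub_inner_le [LinearOrder ι] {v : ι → E} (hv : Orthonormal ℂ v)
    (hδ : 0 ≤ δ) (hS : ∀ z ∈ polarizationSet v, |‖L z‖ ^ 2 - ‖z‖ ^ 2| ≤ δ * ‖z‖ ^ 2) (k h : ι) :
    ‖⟪L (v k), L (v h)⟫_ℂ - ⟪v k, v h⟫_ℂ‖ ≤ 2 * δ := by
  rcases lt_trichotomy h k with hhk | rfl | hkh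
  · rw [hv.inner_eq_zero hhk.ne', sub_zero]
    exact norm_inner_map_le_of_lt L hv hS hhk
  · have hdiag := hS (v h) (Or.inr ⟨h, rfl⟩)
    rw [hv.norm_eq_one, one_pow, mul_one] at hdiag
    rw [inner_self_eq_norm_sq_to_K, inner_self_eq_norm_sq_to_K, hv.norm_eq_one,
      ← RCLike.ofReal_pow, ← RCLike.ofReal_pow, ← RCLike.ofReal_sub, RCLike.norm_ofReal, one_pow]
    linarith
  · rw [hv.inner_eq_zero hkh.ne, sub_zero, norm_inner_symm]
    exact norm_inner_map_le_of_lt L hv hS hkh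

lemma abs_norm_sq_map_sum_sub_le [Fintype ι] (w : ι → E) (c : ι → ℂ) {η : ℝ}
    (hη : ∀ i j, ‖⟪L (w i), L (w j)⟫_ℂ - ⟪w i, w j⟫_ℂ‖ ≤ η) :
    |‖L (∑ i, c i • w i)‖ ^ 2 - ‖∑ i, c i • w i‖ ^ 2| ≤ η * (∑ i, ‖c i‖) ^ 2 := by
  simp only [map_sum, map_smul, norm_sum_smul_sq, ← Complex.sub_re, ← Finset.sum_sub_distrib,
    ← mul_sub]
  calc _ ≤ ‖∑ i, ∑ j, conj (c i) * c j * (⟪L (w i), L (w j)⟫_ℂ - ⟪w i, w j⟫_ℂ)‖ :=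
        Complex.abs_re_le_norm _
    _ ≤ ∑ i, ∑ j, ‖c i‖ * ‖c j‖ * η := by
        refine (norm_sum_le _ _).trans (Finset.sum_le_sum fun i _ => ?_)
        refine (norm_sum_le _ _).trans (Finset.sum_le_sum fun j _ => ?_)
        rw [norm_mul, norm_mul, Complex.norm_conj]
        gcongr
        exact hη i j
    _ = η * (∑ i, ‖c i‖) ^ 2 := by
        rw [sq, Finset.sum_mul_sum, Finset.mul_sum]
        simp only [Finset.mul_sum]
        exact Finset.sum_congr rfl fun i _ => Finset.sum_congr rfl fun j _ => by ring

theorem abs_norm_sq_map_sub_norm_sq_le [Fintype ι] [LinearOrder ι] {v : ι → E}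
    (hv : Orthonormal ℂ v) (hδ : 0 ≤ δ)
    (hS : ∀ z ∈ polarizationSet v, |‖L z‖ ^ 2 - ‖z‖ ^ 2| ≤ δ * ‖z‖ ^ 2) :
    ∀ x ∈ Submodule.span ℂ (Set.range v),
      |‖L x‖ ^ 2 - ‖x‖ ^ 2| ≤ 2 * δ * Fintype.card ι * ‖x‖ ^ 2 := by
  intro x hx
  obtain ⟨c, rfl⟩ := (Submodule.mem_span_range_iff_exists_fun ℂ).mp hx
  calc _ ≤ 2 * δ * (∑ i, ‖c i‖) ^ 2 :=
        abs_norm_sq_map_sum_sub_le L v c (norm_inner_map_sub_inner_le L hv hδ hS)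
    _ ≤ 2 * δ * (Fintype.card ι * ∑ i, ‖c i‖ ^ 2) := by
        gcongr
        exact sq_sum_le_card_mul_sum_sq
    _ = 2 * δ * Fintype.card ι * ‖∑ i, c i • v i‖ ^ 2 := by
        rw [hv.norm_sum_smul_sq]
        ring

end InnerProductSpace

section Tensor

variable {ι κ : Type*} [Fintype ι] [Fintype κ]

lemma tnsq_eq_norm_sq (X : ι → ℂ) : tnsq X = ‖WithLp.toLp 2 X‖ ^ 2 := by
  rw [EuclideanSpace.norm_sq_eq]
  rfl

lemma ttip_eq_inner (X Y : ι → ℂ) : ttip X Y = ⟪WithLp.toLp 2 Y, WithLp.toLp 2 X⟫_ℂ := by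
  simp [ttip, PiLp.inner_apply]

lemma IsJLmap.abs_tnsq_sub_le {δ : ℝ} {L₀ : (ι → ℂ) →ₗ[ℂ] (κ → ℂ)} {S : Set (ι → ℂ)}
    (hL₀ : IsJLmap δ L₀ S) {X : ι → ℂ} (hX : X ∈ S) :
    |tnsq (L₀ X) - tnsq X| ≤ δ * tnsq X := by
  obtain ⟨e, he, hXe⟩ := hL₀ X hX
  have hX₀ : 0 ≤ tnsq X := by rw [tnsq_eq_norm_sq]; positivity
  rw [hXe, show (1 + e) * tnsq X - tnsq X = e * tnsq X by ring, abs_mul, abs_of_nonneg hX₀]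
  exact mul_le_mul_of_nonneg_right (abs_lt.mpr he).le hX₀

end Tensor

/-- If `L₀` is an `(ε/4r)`-JL embedding of the tensors `T_k ± T_h`, `T_k ± i T_h`
(`h < k`) together with the `T_k`, where `T_1, …, T_r` are orthonormal, then
`|‖L₀(X)‖² - ‖X‖²| ≤ ε‖X‖²` for every `X` in the span of the `T_k`. -/
theorem jl_orthonormal_subspace_embedding {d d' r : ℕ} {n : Fin d → ℕ} {md : Fin d' → ℕ}
    {ε : ℝ} (hε : ε ∈ Set.Ioo (0 : ℝ) 1)
    (T : Fin r → ((i : Fin d) → Fin (n i)) → ℂ)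
    (hT : ∀ k h, ttip (T k) (T h) = if k = h then 1 else 0)
    (L₀ : (((i : Fin d) → Fin (n i)) → ℂ) →ₗ[ℂ] (((i : Fin d') → Fin (md i)) → ℂ))
    (hJL : IsJLmap (ε / (4 * r)) L₀
      ({Z | ∃ k h : Fin r, h < k ∧
          (Z = T k - T h ∨ Z = T k + T h ∨
           Z = T k - Complex.I • T h ∨ Z = T k + Complex.I • T h)} ∪ Set.range T)) :
    ∀ X ∈ Submodule.span ℂ (Set.range T),
      |tnsq (L₀ X) - tnsq X| ≤ ε * tnsq X := by
  set toL2 := (WithLp.linearEquiv 2 ℂ (((i : Fin d) → Fin (n i)) → ℂ)).symm.toLinearMap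
  have hv : Orthonormal ℂ (toL2 ∘ T) := by
    rw [orthonormal_iff_ite]
    intro k h
    simpa [toL2, ← ttip_eq_inner, eq_comm] using hT h k
  have hS : ∀ z ∈ polarizationSet (toL2 ∘ T),
      |‖LinearMap.withLpMap 2 L₀ z‖ ^ 2 - ‖z‖ ^ 2| ≤ ε / (4 * r) * ‖z‖ ^ 2 := by
    rw [polarizationSet_comp]
    rintro _ ⟨Z, hZ, rfl⟩
    simpa [toL2, tnsq_eq_norm_sq] using hJL.abs_tnsq_sub_le hZ
  have hconst : 2 * (ε / (4 * r)) * r ≤ ε := by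
    -- for `r = 0` the left side is `0`, as `ε / 0 = 0`
    rcases eq_or_ne r 0 with rfl | hr
    · simpa using hε.1.le
    · field_simp
      linarith [hε.1]
  intro X hX
  have hbound := abs_norm_sq_map_sub_norm_sq_le (LinearMap.withLpMap 2 L₀) hv
    (div_nonneg hε.1.le (by positivity)) hS (toL2 X)
    (by rw [Set.range_comp, Submodule.span_image]; exact Submodule.mem_map_of_mem hX)
  rw [tnsq_eq_norm_sq, tnsq_eq_norm_sq]
  calc _ ≤ 2 * (ε / (4 * r)) * r * ‖WithLp.toLp 2 X‖ ^ 2 := by simpa [toL2] using hbound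
    _ ≤ ε * ‖WithLp.toLp 2 X‖ ^ 2 := by gcongr
end

section
/- Let Y = Σ_{k=1}^r α_k ○_{ℓ=1}^d y_k^{(ℓ)} be a rank-r tensor in standard form (all component vectors of unit norm) with basis coherence μ'_Y < 1/(r-1). Then ‖α‖₂² ≤ (1/(1 - (r-1)μ'_Y)) ‖Y‖², i.e., ‖Y‖² ≥ (1 - (r-1)μ'_Y)‖α‖₂². -/
open scoped BigOperators

/-- The rank-`r` CP tensor `Y = Σ_k α_k ○_ℓ y_k^{(ℓ)}` in standard form. -/
noncomputable def cpTensor {d r : ℕ} {n : Fin d → ℕ} (α : Fin r → ℂ)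
    (y : Fin r → (ℓ : Fin d) → Fin (n ℓ) → ℂ) : ((i : Fin d) → Fin (n i)) → ℂ :=
  fun idx => ∑ k, α k * ∏ ℓ, y k ℓ (idx ℓ)

open Finset ComplexConjugate

/-!
Expanding `‖Y‖²` in the rank-one terms gives the Hermitian form `Σ_{k,h} α_k conj(α_h) G_{kh}`
of the Gram matrix `G_{kh} = Π_ℓ ⟨y_h^{(ℓ)}, y_k^{(ℓ)}⟩`, whose diagonal is `1` by normalisation
and whose off-diagonal entries are bounded by `μ'`. Bounding each off-diagonal term below by
`-μ' |α_k| |α_h|`, it remains to use `Σ_{k≠h} |α_k| |α_h| = (Σ_k |α_k|)² - ‖α‖² ≤ (r - 1) ‖α‖²`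
(Cauchy–Schwarz).
-/

theorem sum_sum_erase_mul_le_card_sub_one_mul {ι : Type*} [Fintype ι] [DecidableEq ι]
    (a : ι → ℝ) :
    ∑ k, ∑ h ∈ univ.erase k, a k * a h ≤ (Fintype.card ι - 1) * ∑ k, a k ^ 2 := by
  have hoff : ∑ k, ∑ h ∈ univ.erase k, a k * a h = (∑ k, a k) ^ 2 - ∑ k, a k ^ 2 := by
    simp_rw [← mul_sum, sum_erase_eq_sub (mem_univ _), mul_sub, sum_sub_distrib, sq, sum_mul]
  have hcs := sq_sum_le_card_mul_sum_sq (s := univ) (f := a)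
  rw [card_univ] at hcs
  rw [hoff, sub_one_mul]
  linarith

theorem quadForm_re_ge_of_diag_eq_one {ι : Type*} [Fintype ι] (G : ι → ι → ℂ) (α : ι → ℂ)
    {μ : ℝ} (hdiag : ∀ k, G k k = 1) (hoff : ∀ k h, k ≠ h → ‖G k h‖ ≤ μ) (hμ : 0 ≤ μ) :
    (1 - (Fintype.card ι - 1) * μ) * ∑ k, ‖α k‖ ^ 2 ≤
      (∑ k, ∑ h, α k * conj (α h) * G k h).re := by
  classical
  have hsplit : ∀ k, ∑ h, α k * conj (α h) * G k h =
      (‖α k‖ ^ 2 : ℝ) + ∑ h ∈ univ.erase k, α k * conj (α h) * G k h := by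
    intro k
    rw [← add_sum_erase _ _ (mem_univ k), hdiag, mul_one, Complex.mul_conj,
      Complex.normSq_eq_norm_sq]
  have hterm : ∀ k h, k ≠ h → -(μ * (‖α k‖ * ‖α h‖)) ≤ (α k * conj (α h) * G k h).re := by
    intro k h hkh
    calc -(μ * (‖α k‖ * ‖α h‖)) ≤ -‖α k * conj (α h) * G k h‖ := by
          rw [norm_mul, norm_mul, Complex.norm_conj, mul_comm μ]
          gcongr
          exact hoff k h hkh
      _ ≤ _ := neg_le_of_abs_le (Complex.abs_re_le_norm _)
  calc (1 - (Fintype.card ι - 1) * μ) * ∑ k, ‖α k‖ ^ 2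
      = ∑ k, ‖α k‖ ^ 2 - μ * ((Fintype.card ι - 1) * ∑ k, ‖α k‖ ^ 2) := by ring
    _ ≤ ∑ k, ‖α k‖ ^ 2 - μ * ∑ k, ∑ h ∈ univ.erase k, ‖α k‖ * ‖α h‖ := by
        gcongr
        exact sum_sum_erase_mul_le_card_sub_one_mul _
    _ = ∑ k, (‖α k‖ ^ 2 + ∑ h ∈ univ.erase k, -(μ * (‖α k‖ * ‖α h‖))) := by
        simp only [sum_add_distrib, sum_neg_distrib, mul_sum, sub_eq_add_neg]
    _ ≤ ∑ k, (‖α k‖ ^ 2 + ∑ h ∈ univ.erase k, (α k * conj (α h) * G k h).re) := by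
        gcongr with k _ h hh
        exact hterm k h (ne_of_mem_erase hh).symm
    _ = _ := by simp only [hsplit, Complex.re_sum, Complex.add_re, Complex.ofReal_re]

noncomputable def cpGram {d r : ℕ} {n : Fin d → ℕ} (y : Fin r → (ℓ : Fin d) → Fin (n ℓ) → ℂ)
    (k h : Fin r) : ℂ :=
  ∏ ℓ, ∑ i, y k ℓ i * conj (y h ℓ i)

theorem tnsq_cpTensor {d r : ℕ} {n : Fin d → ℕ} (α : Fin r → ℂ)
    (y : Fin r → (ℓ : Fin d) → Fin (n ℓ) → ℂ) :
    tnsq (cpTensor α y) = (∑ k, ∑ h, α k * conj (α h) * cpGram y k h).re := by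
  have hsq : ∀ z : ℂ, ‖z‖ ^ 2 = (z * conj z).re := fun z => by
    rw [Complex.mul_conj, Complex.ofReal_re, Complex.normSq_eq_norm_sq]
  have hexpand : ∀ idx, cpTensor α y idx * conj (cpTensor α y idx) =
      ∑ k, ∑ h, α k * conj (α h) * ∏ ℓ, y k ℓ (idx ℓ) * conj (y h ℓ (idx ℓ)) := fun idx => by
    simp only [cpTensor, map_sum, map_mul, map_prod, sum_mul_sum]
    refine sum_congr rfl fun k _ => sum_congr rfl fun h _ => ?_
    rw [mul_mul_mul_comm, prod_mul_distrib]
  simp only [tnsq, hsq, hexpand, cpGram, Fintype.prod_sum, mul_sum, ← Complex.re_sum]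
  rw [sum_comm]
  exact congrArg _ (sum_congr rfl fun k _ => sum_comm)

theorem cpGram_self {d r : ℕ} {n : Fin d → ℕ} {y : Fin r → (ℓ : Fin d) → Fin (n ℓ) → ℂ}
    (hnorm : ∀ k ℓ, ∑ i, ‖y k ℓ i‖ ^ 2 = (1 : ℝ)) (k : Fin r) : cpGram y k k = 1 := by
  have hℓ : ∀ ℓ, ∑ i, y k ℓ i * conj (y k ℓ i) = ((∑ i, ‖y k ℓ i‖ ^ 2 : ℝ) : ℂ) := fun ℓ => by
    push_cast
    simp only [Complex.mul_conj, Complex.normSq_eq_norm_sq, Complex.ofReal_pow]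
  simp only [cpGram, hℓ, hnorm, Complex.ofReal_one, prod_const_one]

/-- If `Y = Σ_k α_k ○_ℓ y_k^{(ℓ)}` is in standard form (all component vectors of unit
norm) and its basis coherence `μ' = max_{k≠h} Π_ℓ |⟨y_k^{(ℓ)}, y_h^{(ℓ)}⟩|` satisfies
`(r-1)μ' < 1`, then `‖α‖₂² ≤ (1/(1 - (r-1)μ')) ‖Y‖²`. -/
theorem coeff_norm_le_of_incoherent {d r : ℕ} {n : Fin d → ℕ} (α : Fin r → ℂ) (μ' : ℝ)
    (y : Fin r → (ℓ : Fin d) → Fin (n ℓ) → ℂ)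
    (hnorm : ∀ k ℓ, ∑ i, ‖y k ℓ i‖ ^ 2 = (1 : ℝ))
    (hμ : ∀ k h : Fin r, k ≠ h →
      (∏ ℓ, ‖∑ i, y k ℓ i * (starRingEnd ℂ) (y h ℓ i)‖) ≤ μ')
    (hμ0 : 0 ≤ μ') (hμlt : ((r : ℝ) - 1) * μ' < 1) :
    ∑ k, ‖α k‖ ^ 2 ≤ (1 / (1 - ((r : ℝ) - 1) * μ')) * tnsq (cpTensor α y) := by
  have hpos : 0 < 1 - ((r : ℝ) - 1) * μ' := by linarith
  have hgram : (1 - ((r : ℝ) - 1) * μ') * ∑ k, ‖α k‖ ^ 2 ≤ tnsq (cpTensor α y) := by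
    have hoff : ∀ k h, k ≠ h → ‖cpGram y k h‖ ≤ μ' := fun k h hkh =>
      (norm_prod _ _).trans_le (hμ k h hkh)
    simpa [tnsq_cpTensor] using
      quadForm_re_ge_of_diag_eq_one (cpGram y) α (cpGram_self hnorm) hoff hμ0
  rw [one_div_mul_eq_div, le_div_iff₀ hpos]
  linarith
end

section
/- Let Y ∈ C^{n1×...×nd} be a rank-r tensor in standard form and A ∈ C^{m×nj} an (ε/4)-JL embedding of the 2r² - r vectors consisting of {y_k^{(j)} - y_h^{(j)}, y_k^{(j)} + y_h^{(j)}, y_k^{(j)} - i y_h^{(j)}, y_k^{(j)} + i y_h^{(j)} : 1 ≤ h < k ≤ r} together with {y_k^{(j)} : k ∈ [r]}. Then |‖Y ×_j A‖² - ‖Y‖²| ≤ ε(1 + √(r(r-1)) Π_{ℓ≠j} μ_{Y,ℓ}) ‖α‖₂² ≤ ε(1 + r μ_Y^{d-1})‖α‖₂² ≤ ε(r+1)‖α‖₂². -/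
open scoped BigOperators

/-- The `j`-mode product `X ×_j B`. -/
noncomputable def modeProd {d : ℕ} {n : Fin d → ℕ} (j : Fin d) {m : ℕ}
    (X : ((i : Fin d) → Fin (n i)) → ℂ) (B : Matrix (Fin m) (Fin (n j)) ℂ) :
    ((i : Fin d) → Fin (Function.update n j m i)) → ℂ :=
  fun idx => ∑ t : Fin (n j),
    B (Fin.cast (Function.update_self j m n) (idx j)) t *
      X (fun i => if h : i = j then Fin.cast (by rw [h]) t
          else Fin.cast (Function.update_of_ne h m n) (idx i))

/-- The mode-`ℓ` coherence `μ_{Y,ℓ} = max_{k ≠ h} |⟨y_k^{(ℓ)}, y_h^{(ℓ)}⟩|`. -/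
noncomputable def modeCoh {d r : ℕ} {n : Fin d → ℕ}
    (y : Fin r → (ℓ : Fin d) → Fin (n ℓ) → ℂ) (ℓ : Fin d) : ℝ :=
  ⨆ p : {p : Fin r × Fin r // p.1 ≠ p.2},
    ‖∑ i, y p.1.1 ℓ i * (starRingEnd ℂ) (y p.1.2 ℓ i)‖

set_option maxHeartbeats 1000000
open Complex

noncomputable def dotc {N : ℕ} (u v : Fin N → ℂ) : ℂ := ∑ i, u i * (starRingEnd ℂ) (v i)

lemma dotc_self {N : ℕ} (u : Fin N → ℂ) : dotc u u = ((nsq u : ℝ) : ℂ) := by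
  rw [nsq, dotc]
  push_cast
  refine Finset.sum_congr rfl fun i _ => ?_
  rw [Complex.mul_conj, Complex.normSq_eq_norm_sq]
  push_cast; ring

lemma nsq_nonneg_s13 {N : ℕ} (u : Fin N → ℂ) : 0 ≤ nsq u :=
  Finset.sum_nonneg fun _ _ => by positivity

lemma dotc_comm {N : ℕ} (u v : Fin N → ℂ) :
    dotc v u = (starRingEnd ℂ) (dotc u v) := by
  rw [dotc, dotc, map_sum]
  exact Finset.sum_congr rfl fun i _ => by simp [mul_comm]

lemma nsq_expand {N : ℕ} (u v : Fin N → ℂ) :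
    nsq (u + v) = nsq u + nsq v + 2 * (dotc u v).re := by
  have h : ((nsq (u+v) : ℝ) : ℂ) = dotc (u+v) (u+v) := (dotc_self _).symm
  have h2 : dotc (u+v) (u+v) = dotc u u + dotc v v + (dotc u v + dotc v u) := by
    simp only [dotc, Pi.add_apply, map_add]
    rw [← Finset.sum_add_distrib, ← Finset.sum_add_distrib, ← Finset.sum_add_distrib]
    exact Finset.sum_congr rfl fun i _ => by ring
  have := congrArg Complex.re (h.trans h2)
  simp only [Complex.ofReal_re, Complex.add_re] at this
  rw [this, dotc_self, dotc_self, dotc_comm u v]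
  simp
  ring

lemma nsq_smul_I {N : ℕ} (v : Fin N → ℂ) : nsq (Complex.I • v) = nsq v := by
  unfold nsq
  exact Finset.sum_congr rfl fun i _ => by simp

lemma dotc_smul_I {N : ℕ} (u v : Fin N → ℂ) :
    dotc u (Complex.I • v) = -Complex.I * dotc u v := by
  unfold dotc
  rw [Finset.mul_sum]
  refine Finset.sum_congr rfl fun i _ => ?_
  simp [Complex.conj_I]
  ring

lemma nsq_sub_expand {N : ℕ} (u v : Fin N → ℂ) :
    nsq (u - v) = nsq u + nsq v - 2 * (dotc u v).re := by
  have h := nsq_expand u (-v)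
  have h1 : u + -v = u - v := by ring
  have h2 : nsq (-v) = nsq v := Finset.sum_congr rfl fun i _ => by simp
  have h3 : dotc u (-v) = - dotc u v := by
    unfold dotc; rw [← Finset.sum_neg_distrib]
    exact Finset.sum_congr rfl fun i _ => by simp
  rw [h1, h2, h3] at h
  simp at h; linarith

lemma nsq_expand_I {N : ℕ} (u v : Fin N → ℂ) :
    nsq (u + Complex.I • v) = nsq u + nsq v + 2 * (dotc u v).im := by
  rw [nsq_expand, nsq_smul_I, dotc_smul_I]
  have : (-Complex.I * dotc u v).re = (dotc u v).im := by
    simp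
  rw [this]

lemma nsq_sub_expand_I {N : ℕ} (u v : Fin N → ℂ) :
    nsq (u - Complex.I • v) = nsq u + nsq v - 2 * (dotc u v).im := by
  rw [nsq_sub_expand, nsq_smul_I, dotc_smul_I]
  have : (-Complex.I * dotc u v).re = (dotc u v).im := by simp
  rw [this]

lemma jl_polar {N m : ℕ} {ε : ℝ} (hε : 0 < ε) (A : Matrix (Fin m) (Fin N) ℂ)
    (u v : Fin N → ℂ) (hu : nsq u = 1) (hv : nsq v = 1)
    (h1 : ∃ e ∈ Set.Ioo (-(ε/4)) (ε/4), nsq (A.mulVec (u - v)) = (1+e) * nsq (u - v))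
    (h2 : ∃ e ∈ Set.Ioo (-(ε/4)) (ε/4), nsq (A.mulVec (u + v)) = (1+e) * nsq (u + v))
    (h3 : ∃ e ∈ Set.Ioo (-(ε/4)) (ε/4), nsq (A.mulVec (u - Complex.I • v)) = (1+e) * nsq (u - Complex.I • v))
    (h4 : ∃ e ∈ Set.Ioo (-(ε/4)) (ε/4), nsq (A.mulVec (u + Complex.I • v)) = (1+e) * nsq (u + Complex.I • v)) :
    ‖dotc (A.mulVec u) (A.mulVec v) - dotc u v‖ ≤ ε := by
  obtain ⟨e1, he1, H1⟩ := h1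
  obtain ⟨e2, he2, H2⟩ := h2
  obtain ⟨e3, he3, H3⟩ := h3
  obtain ⟨e4, he4, H4⟩ := h4
  set Du := A.mulVec u
  set Dv := A.mulVec v
  rw [Matrix.mulVec_sub] at H1 H3
  rw [Matrix.mulVec_add] at H2 H4
  rw [Matrix.mulVec_smul] at H3 H4
  set D := dotc Du Dv - dotc u v with hD
  -- real part
  have hdr : D.re = (dotc Du Dv).re - (dotc u v).re := by rw [hD]; simp
  have hdi : D.im = (dotc Du Dv).im - (dotc u v).im := by rw [hD]; simp
  have hRe : (4:ℝ) * D.re = e2 * nsq (u+v) - e1 * nsq (u-v) := by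
    have a1 := nsq_expand Du Dv
    have a2 := nsq_sub_expand Du Dv
    have b1 := nsq_expand u v
    have b2 := nsq_sub_expand u v
    rw [hdr]; linarith [H1, H2]
  have hIm : (4:ℝ) * D.im = e4 * nsq (u+Complex.I • v) - e3 * nsq (u-Complex.I • v) := by
    have a1 := nsq_expand_I Du Dv
    have a2 := nsq_sub_expand_I Du Dv
    have b1 := nsq_expand_I u v
    have b2 := nsq_sub_expand_I u v
    rw [hdi]; linarith [H3, H4]
  have hsum : nsq (u+v) + nsq (u-v) = 4 := by
    have := nsq_expand u v; have := nsq_sub_expand u v; linarith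
  have hsumI : nsq (u+Complex.I • v) + nsq (u-Complex.I • v) = 4 := by
    have := nsq_expand_I u v; have := nsq_sub_expand_I u v; linarith
  have n1 := nsq_nonneg_s13 (u - v); have n2 := nsq_nonneg_s13 (u + v)
  have n3 := nsq_nonneg_s13 (u - Complex.I • v); have n4 := nsq_nonneg_s13 (u + Complex.I • v)
  have p1a : e1 * nsq (u-v) ≤ (ε/4) * nsq (u-v) :=
    mul_le_mul_of_nonneg_right (le_of_lt he1.2) n1
  have p1b : -((ε/4) * nsq (u-v)) ≤ e1 * nsq (u-v) := by
    have := mul_le_mul_of_nonneg_right (le_of_lt he1.1) n1; linarith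
  have p2a : e2 * nsq (u+v) ≤ (ε/4) * nsq (u+v) :=
    mul_le_mul_of_nonneg_right (le_of_lt he2.2) n2
  have p2b : -((ε/4) * nsq (u+v)) ≤ e2 * nsq (u+v) := by
    have := mul_le_mul_of_nonneg_right (le_of_lt he2.1) n2; linarith
  have p3a : e3 * nsq (u-Complex.I • v) ≤ (ε/4) * nsq (u-Complex.I • v) :=
    mul_le_mul_of_nonneg_right (le_of_lt he3.2) n3
  have p3b : -((ε/4) * nsq (u-Complex.I • v)) ≤ e3 * nsq (u-Complex.I • v) := by
    have := mul_le_mul_of_nonneg_right (le_of_lt he3.1) n3; linarith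
  have p4a : e4 * nsq (u+Complex.I • v) ≤ (ε/4) * nsq (u+Complex.I • v) :=
    mul_le_mul_of_nonneg_right (le_of_lt he4.2) n4
  have p4b : -((ε/4) * nsq (u+Complex.I • v)) ≤ e4 * nsq (u+Complex.I • v) := by
    have := mul_le_mul_of_nonneg_right (le_of_lt he4.1) n4; linarith
  have q : (ε/4) * nsq (u+v) + (ε/4) * nsq (u-v) = ε := by
    have h' : (ε/4) * (nsq (u+v) + nsq (u-v)) = (ε/4) * 4 := by rw [hsum]
    nlinarith [h']
  have qI : (ε/4) * nsq (u+Complex.I • v) + (ε/4) * nsq (u-Complex.I • v) = ε := by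
    have h' : (ε/4) * (nsq (u+Complex.I • v) + nsq (u-Complex.I • v)) = (ε/4) * 4 := by
      rw [hsumI]
    nlinarith [h']
  have hReb : |D.re| ≤ ε/4 := by
    rw [abs_le]
    constructor
    · linarith [hRe, p2b, p1a, q]
    · linarith [hRe, p2a, p1b, q]
  have hImb : |D.im| ≤ ε/4 := by
    rw [abs_le]
    constructor
    · linarith [hIm, p4b, p3a, qI]
    · linarith [hIm, p4a, p3b, qI]
  calc ‖D‖ ≤ |D.re| + |D.im| := Complex.norm_le_abs_re_add_abs_im _
    _ ≤ ε/4 + ε/4 := add_le_add hReb hImb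
    _ ≤ ε := by linarith

lemma tnsq_cp {d r : ℕ} {n : Fin d → ℕ} (α : Fin r → ℂ)
    (z : Fin r → (ℓ : Fin d) → Fin (n ℓ) → ℂ) :
    tnsq (cpTensor α z)
      = (∑ k, ∑ h, α k * (starRingEnd ℂ) (α h) * ∏ ℓ, dotc (z k ℓ) (z h ℓ)).re := by
  have key : ∀ idx, (‖cpTensor α z idx‖:ℝ) ^ 2
      = (cpTensor α z idx * (starRingEnd ℂ) (cpTensor α z idx)).re := by
    intro idx
    rw [Complex.mul_conj, Complex.ofReal_re, Complex.normSq_eq_norm_sq]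
  unfold tnsq
  simp_rw [key]
  rw [← Complex.re_sum]
  congr 1
  have expand : ∀ idx, cpTensor α z idx * (starRingEnd ℂ) (cpTensor α z idx)
      = ∑ k, ∑ h, α k * (starRingEnd ℂ) (α h)
          * ∏ ℓ, (z k ℓ (idx ℓ) * (starRingEnd ℂ) (z h ℓ (idx ℓ))) := by
    intro idx
    unfold cpTensor
    rw [map_sum, Finset.sum_mul_sum]
    refine Finset.sum_congr rfl fun k _ => Finset.sum_congr rfl fun h _ => ?_
    rw [map_mul, map_prod, Finset.prod_mul_distrib]
    ring
  simp_rw [expand]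
  rw [Finset.sum_comm]
  refine Finset.sum_congr rfl fun k _ => ?_
  rw [Finset.sum_comm]
  refine Finset.sum_congr rfl fun h _ => ?_
  rw [← Finset.mul_sum]
  congr 1
  simp only [dotc]
  exact (Fintype.prod_sum (fun ℓ (i : Fin (n ℓ)) => z k ℓ i * (starRingEnd ℂ) (z h ℓ i))).symm

/-- the modified factor vectors after applying `A` in mode `j` -/
noncomputable def zvec {d r m : ℕ} {n : Fin d → ℕ} (j : Fin d)
    (y : Fin r → (ℓ : Fin d) → Fin (n ℓ) → ℂ) (A : Matrix (Fin m) (Fin (n j)) ℂ)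
    (k : Fin r) (ℓ : Fin d) : Fin (Function.update n j m ℓ) → ℂ :=
  if h : ℓ = j
    then fun i => A.mulVec (y k j) (Fin.cast (by rw [h, Function.update_self]) i)
    else fun i => y k ℓ (Fin.cast (Function.update_of_ne h m n) i)

lemma modeProd_cp {d r m : ℕ} {n : Fin d → ℕ} (j : Fin d) (α : Fin r → ℂ)
    (y : Fin r → (ℓ : Fin d) → Fin (n ℓ) → ℂ) (A : Matrix (Fin m) (Fin (n j)) ℂ) :
    modeProd j (cpTensor α y) A = cpTensor α (zvec j y A) := by
  funext idx
  unfold modeProd cpTensor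
  simp_rw [Finset.mul_sum]
  rw [Finset.sum_comm]
  refine Finset.sum_congr rfl fun k _ => ?_
  have comm : ∀ t : Fin (n j), A (Fin.cast (Function.update_self j m n) (idx j)) t *
      (α k * ∏ ℓ, y k ℓ ((fun i => if h : i = j then Fin.cast (by rw [h]) t
          else Fin.cast (Function.update_of_ne h m n) (idx i)) ℓ))
      = α k * (A (Fin.cast (Function.update_self j m n) (idx j)) t *
        ∏ ℓ, y k ℓ ((fun i => if h : i = j then Fin.cast (by rw [h]) t
          else Fin.cast (Function.update_of_ne h m n) (idx i)) ℓ)) := fun t => by ring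
  simp_rw [comm]
  rw [← Finset.mul_sum]
  congr 1
  -- split the ℓ-product at j on both sides
  have hRHS : ∏ ℓ, zvec j y A k ℓ (idx ℓ)
      = zvec j y A k j (idx j) * ∏ ℓ ∈ Finset.univ.erase j, zvec j y A k ℓ (idx ℓ) :=
    (Finset.mul_prod_erase Finset.univ _ (Finset.mem_univ j)).symm
  rw [hRHS]
  have hL : ∀ t : Fin (n j),
      (∏ ℓ, y k ℓ (if h : ℓ = j then Fin.cast (by rw [h]) t
          else Fin.cast (Function.update_of_ne h m n) (idx ℓ)))
      = y k j t * ∏ ℓ ∈ Finset.univ.erase j, zvec j y A k ℓ (idx ℓ) := by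
    intro t
    rw [← Finset.mul_prod_erase Finset.univ _ (Finset.mem_univ j)]
    have e1 : y k j (if h : j = j then Fin.cast (by rw [h]) t
          else Fin.cast (Function.update_of_ne h m n) (idx j)) = y k j t := by
      rw [dif_pos rfl]
      congr 1
    rw [e1]
    congr 1
    refine Finset.prod_congr rfl fun ℓ hℓ => ?_
    have hne : ℓ ≠ j := Finset.ne_of_mem_erase hℓ
    rw [dif_neg hne, zvec, dif_neg hne]
  simp_rw [hL]
  simp_rw [← mul_assoc]
  rw [← Finset.sum_mul]
  congr 1
  simp only [zvec, dif_pos]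
  rw [Matrix.mulVec]
  simp [dotProduct]

lemma dotc_zvec_j {d r m : ℕ} {n : Fin d → ℕ} (j : Fin d)
    (y : Fin r → (ℓ : Fin d) → Fin (n ℓ) → ℂ) (A : Matrix (Fin m) (Fin (n j)) ℂ)
    (k h : Fin r) :
    dotc (zvec j y A k j) (zvec j y A h j)
      = dotc (A.mulVec (y k j)) (A.mulVec (y h j)) := by
  unfold dotc zvec
  rw [dif_pos rfl, dif_pos rfl]
  apply Fintype.sum_equiv (finCongr (Function.update_self j m n))
  intro i
  rfl

lemma dotc_zvec_ne {d r m : ℕ} {n : Fin d → ℕ} (j : Fin d)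
    (y : Fin r → (ℓ : Fin d) → Fin (n ℓ) → ℂ) (A : Matrix (Fin m) (Fin (n j)) ℂ)
    (k h : Fin r) {ℓ : Fin d} (hne : ℓ ≠ j) :
    dotc (zvec j y A k ℓ) (zvec j y A h ℓ) = dotc (y k ℓ) (y h ℓ) := by
  unfold dotc zvec
  rw [dif_neg hne, dif_neg hne]
  apply Fintype.sum_equiv (finCongr (Function.update_of_ne hne m n))
  intro i
  rfl


lemma dotc_norm_le {N : ℕ} (u v : Fin N → ℂ) :
    ‖dotc u v‖ ≤ Real.sqrt (nsq u) * Real.sqrt (nsq v) := by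
  calc ‖dotc u v‖ ≤ ∑ i, ‖u i‖ * ‖v i‖ := by
        refine (norm_sum_le _ _).trans (le_of_eq (Finset.sum_congr rfl fun i _ => ?_))
        rw [norm_mul, RCLike.norm_conj]
    _ ≤ Real.sqrt (∑ i, ‖u i‖ ^ 2) * Real.sqrt (∑ i, ‖v i‖ ^ 2) :=
        Real.sum_mul_le_sqrt_mul_sqrt _ _ _
    _ = Real.sqrt (nsq u) * Real.sqrt (nsq v) := rfl

/-- If `A` is an `(ε/4)`-JL embedding of the `2r² - r` vectors
`{y_k^{(j)} ± y_h^{(j)}, y_k^{(j)} ± i y_h^{(j)} : h < k} ∪ {y_k^{(j)}}`, then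
`|‖Y ×_j A‖² - ‖Y‖²| ≤ ε(1 + √(r(r-1)) Π_{ℓ≠j} μ_{Y,ℓ})‖α‖₂²
 ≤ ε(1 + r μ_Y^{d-1})‖α‖₂² ≤ ε(r+1)‖α‖₂²`. -/
theorem modeProd_jl_norm_bound {d r m : ℕ} {n : Fin d → ℕ} (j : Fin d) {ε : ℝ}
    (hε : ε ∈ Set.Ioo (0 : ℝ) 1) (α : Fin r → ℂ)
    (y : Fin r → (ℓ : Fin d) → Fin (n ℓ) → ℂ)
    (hnorm : ∀ k ℓ, ∑ i, ‖y k ℓ i‖ ^ 2 = (1 : ℝ))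
    (A : Matrix (Fin m) (Fin (n j)) ℂ)
    (hA : IsJL (ε / 4) A
      ({v | ∃ k h : Fin r, h < k ∧
          (v = y k j - y h j ∨ v = y k j + y h j ∨
           v = y k j - Complex.I • y h j ∨ v = y k j + Complex.I • y h j)} ∪
        Set.range fun k => y k j)) :
    |tnsq (modeProd j (cpTensor α y) A) - tnsq (cpTensor α y)| ≤
        ε * (1 + Real.sqrt ((r : ℝ) * ((r : ℝ) - 1)) *
          ∏ ℓ ∈ Finset.univ.erase j, modeCoh y ℓ) * (∑ k, ‖α k‖ ^ 2) ∧
      ε * (1 + Real.sqrt ((r : ℝ) * ((r : ℝ) - 1)) *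
          ∏ ℓ ∈ Finset.univ.erase j, modeCoh y ℓ) * (∑ k, ‖α k‖ ^ 2) ≤
        ε * (1 + (r : ℝ) * (⨆ ℓ, modeCoh y ℓ) ^ (d - 1)) * (∑ k, ‖α k‖ ^ 2) ∧
      ε * (1 + (r : ℝ) * (⨆ ℓ, modeCoh y ℓ) ^ (d - 1)) * (∑ k, ‖α k‖ ^ 2) ≤
        ε * ((r : ℝ) + 1) * (∑ k, ‖α k‖ ^ 2) := by
  classical
  obtain ⟨hε0, hε1⟩ := hε
  have hS2nn : (0:ℝ) ≤ ∑ k, ‖α k‖ ^ 2 := Finset.sum_nonneg fun _ _ => by positivity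
  set S2 : ℝ := ∑ k, ‖α k‖ ^ 2 with hS2def
  have hcoh_nn : ∀ ℓ, 0 ≤ modeCoh y ℓ := fun ℓ => Real.iSup_nonneg fun p => norm_nonneg _
  have hnsq1 : ∀ k ℓ, nsq (y k ℓ) = 1 := fun k ℓ => hnorm k ℓ
  set c : Fin r → Fin r → Fin d → ℂ := fun k h ℓ => dotc (y k ℓ) (y h ℓ) with hcdef
  set g : Fin r → Fin r → ℂ
    := fun k h => dotc (A.mulVec (y k j)) (A.mulVec (y h j)) with hgdef
  have hcc : ∀ k h ℓ, c k h ℓ = dotc (y k ℓ) (y h ℓ) := fun k h ℓ => by rw [hcdef]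
  have hgg : ∀ k h, g k h = dotc (A.mulVec (y k j)) (A.mulVec (y h j)) :=
    fun k h => by rw [hgdef]
  set M : ℝ := ∏ ℓ ∈ Finset.univ.erase j, modeCoh y ℓ with hMdef
  have hMnn : 0 ≤ M := by rw [hMdef]; exact Finset.prod_nonneg fun ℓ _ => hcoh_nn ℓ
  have hc_diag : ∀ k ℓ, c k k ℓ = 1 := by
    intro k ℓ; rw [hcc, dotc_self, hnsq1]; norm_num
  have hc_le : ∀ (k h : Fin r), k ≠ h → ∀ ℓ, ‖c k h ℓ‖ ≤ modeCoh y ℓ := by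
    intro k h hkh ℓ
    rw [hcc]
    exact le_ciSup (f := fun p : {p : Fin r × Fin r // p.1 ≠ p.2} =>
        ‖∑ i, y p.1.1 ℓ i * (starRingEnd ℂ) (y p.1.2 ℓ i)‖)
      (Set.Finite.bddAbove (Set.finite_range _)) ⟨(k, h), hkh⟩
  have hc_le1 : ∀ (k h : Fin r) ℓ, ‖c k h ℓ‖ ≤ 1 := by
    intro k h ℓ
    rw [hcc]
    have := dotc_norm_le (y k ℓ) (y h ℓ)
    rw [hnsq1, hnsq1] at this
    simpa using this
  have hcoh_le1 : ∀ ℓ, modeCoh y ℓ ≤ 1 := by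
    intro ℓ
    refine Real.iSup_le (fun p => ?_) zero_le_one
    have := hc_le1 p.1.1 p.1.2 ℓ
    rw [hcc] at this
    exact this
  -- two tnsq formulas
  have hT1 : tnsq (modeProd j (cpTensor α y) A)
      = (∑ k, ∑ h, α k * (starRingEnd ℂ) (α h)
          * (g k h * ∏ ℓ ∈ Finset.univ.erase j, c k h ℓ)).re := by
    rw [modeProd_cp, tnsq_cp]
    congr 1
    refine Finset.sum_congr rfl fun k _ => Finset.sum_congr rfl fun h _ => ?_
    congr 1
    rw [← Finset.mul_prod_erase Finset.univ _ (Finset.mem_univ j), dotc_zvec_j, ← hgg]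
    congr 1
    refine Finset.prod_congr rfl fun ℓ hℓ => ?_
    rw [dotc_zvec_ne j y A k h (Finset.ne_of_mem_erase hℓ), ← hcc]
  have hT2 : tnsq (cpTensor α y)
      = (∑ k, ∑ h, α k * (starRingEnd ℂ) (α h)
          * (c k h j * ∏ ℓ ∈ Finset.univ.erase j, c k h ℓ)).re := by
    rw [tnsq_cp]
    congr 1
    refine Finset.sum_congr rfl fun k _ => Finset.sum_congr rfl fun h _ => ?_
    congr 1
    rw [← Finset.mul_prod_erase Finset.univ (fun ℓ => dotc (y k ℓ) (y h ℓ)) (Finset.mem_univ j)]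
  have hdiff : tnsq (modeProd j (cpTensor α y) A) - tnsq (cpTensor α y)
      = (∑ k, ∑ h, α k * (starRingEnd ℂ) (α h)
          * ((g k h - c k h j) * ∏ ℓ ∈ Finset.univ.erase j, c k h ℓ)).re := by
    rw [hT1, hT2, ← Complex.sub_re, ← Finset.sum_sub_distrib]
    congr 1
    refine Finset.sum_congr rfl fun k _ => ?_
    rw [← Finset.sum_sub_distrib]
    exact Finset.sum_congr rfl fun h _ => by ring
  -- JL bounds
  have hdiagE : ∀ k : Fin r, ‖g k k - c k k j‖ ≤ ε / 4 := by
    intro k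
    obtain ⟨e, he, hEq⟩ := hA (y k j) (Or.inr ⟨k, rfl⟩)
    rw [hc_diag, hgg, dotc_self, hEq, hnsq1]
    calc ‖((((1+e) * 1 : ℝ)):ℂ) - 1‖ = |e| := by
          rw [show ((((1+e) * 1 : ℝ)):ℂ) - 1 = ((e:ℝ):ℂ) by push_cast; ring]
          rw [Complex.norm_real, Real.norm_eq_abs]
      _ ≤ ε / 4 := le_of_lt (abs_lt.2 ⟨he.1, he.2⟩)
  have hoffE : ∀ k h : Fin r, k ≠ h → ‖g k h - c k h j‖ ≤ ε := by
    have key : ∀ k h : Fin r, h < k → ‖g k h - c k h j‖ ≤ ε := by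
      intro k h hkh
      rw [hgg, hcc]
      exact jl_polar hε0 A (y k j) (y h j) (hnsq1 k j) (hnsq1 h j)
        (hA _ (Or.inl ⟨k, h, hkh, Or.inl rfl⟩))
        (hA _ (Or.inl ⟨k, h, hkh, Or.inr (Or.inl rfl)⟩))
        (hA _ (Or.inl ⟨k, h, hkh, Or.inr (Or.inr (Or.inl rfl))⟩))
        (hA _ (Or.inl ⟨k, h, hkh, Or.inr (Or.inr (Or.inr rfl))⟩))
    intro k h hne
    rcases lt_or_gt_of_ne hne with hlt | hgt
    · have hconj : g k h - c k h j = (starRingEnd ℂ) (g h k - c h k j) := by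
        rw [map_sub, hgg, hgg, hcc, hcc, ← dotc_comm, ← dotc_comm]
      rw [hconj, RCLike.norm_conj]
      exact key h k hlt
    · exact key k h hgt
  set E : Fin r → Fin r → ℝ := fun k h => ‖α k‖ * ‖α h‖
      * (‖g k h - c k h j‖ * ∏ ℓ ∈ Finset.univ.erase j, ‖c k h ℓ‖) with hEdef
  have hE : ∀ k h, E k h = ‖α k‖ * ‖α h‖
      * (‖g k h - c k h j‖ * ∏ ℓ ∈ Finset.univ.erase j, ‖c k h ℓ‖) := fun k h => by rw [hEdef]
  have habs : |tnsq (modeProd j (cpTensor α y) A) - tnsq (cpTensor α y)|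
      ≤ ∑ k, ∑ h, E k h := by
    rw [hdiff]
    calc |(∑ k, ∑ h, α k * (starRingEnd ℂ) (α h)
          * ((g k h - c k h j) * ∏ ℓ ∈ Finset.univ.erase j, c k h ℓ)).re|
        ≤ ‖∑ k, ∑ h, α k * (starRingEnd ℂ) (α h)
          * ((g k h - c k h j) * ∏ ℓ ∈ Finset.univ.erase j, c k h ℓ)‖ := by
          exact Complex.abs_re_le_norm _
      _ ≤ ∑ k, ∑ h, E k h := by
          refine (norm_sum_le _ _).trans (Finset.sum_le_sum fun k _ => ?_)
          refine (norm_sum_le _ _).trans (Finset.sum_le_sum fun h _ => le_of_eq ?_)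
          rw [hE, norm_mul, norm_mul, norm_mul, RCLike.norm_conj, norm_prod]
  have hsplit : (∑ k, ∑ h, E k h)
      = (∑ k, E k k) + ∑ k, ∑ h ∈ Finset.univ.erase k, E k h := by
    rw [← Finset.sum_add_distrib]
    exact Finset.sum_congr rfl fun k _ =>
      (Finset.add_sum_erase _ _ (Finset.mem_univ k)).symm
  have hdiag_bound : (∑ k, E k k) ≤ (ε/4) * S2 := by
    rw [hS2def, Finset.mul_sum]
    refine Finset.sum_le_sum fun k _ => ?_
    have hprod1 : (∏ ℓ ∈ Finset.univ.erase j, ‖c k k ℓ‖) = 1 := by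
      refine Finset.prod_eq_one fun ℓ _ => ?_
      rw [hc_diag]; simp
    rw [hE, hprod1, mul_one]
    have h1 := hdiagE k
    have h2 : (0:ℝ) ≤ ‖α k‖ * ‖α k‖ := mul_nonneg (norm_nonneg _) (norm_nonneg _)
    calc ‖α k‖ * ‖α k‖ * ‖g k k - c k k j‖ ≤ ‖α k‖ * ‖α k‖ * (ε/4) :=
          mul_le_mul_of_nonneg_left h1 h2
      _ = ε / 4 * ‖α k‖ ^ 2 := by ring
  have hoff_bound : (∑ k, ∑ h ∈ Finset.univ.erase k, E k h)
      ≤ ε * M * ∑ k, ∑ h ∈ Finset.univ.erase k, ‖α k‖ * ‖α h‖ := by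
    rw [Finset.mul_sum]
    refine Finset.sum_le_sum fun k _ => ?_
    rw [Finset.mul_sum]
    refine Finset.sum_le_sum fun h hh => ?_
    have hne : k ≠ h := (Finset.ne_of_mem_erase hh).symm
    have hprodM : (∏ ℓ ∈ Finset.univ.erase j, ‖c k h ℓ‖) ≤ M := by
      rw [hMdef]
      exact Finset.prod_le_prod (fun ℓ _ => norm_nonneg _) (fun ℓ _ => hc_le k h hne ℓ)
    have hEbound : ‖g k h - c k h j‖ * ∏ ℓ ∈ Finset.univ.erase j, ‖c k h ℓ‖ ≤ ε * M :=
      mul_le_mul (hoffE k h hne) hprodM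
        (Finset.prod_nonneg fun ℓ _ => norm_nonneg _) (le_of_lt hε0)
    rw [hE]
    calc ‖α k‖ * ‖α h‖ * (‖g k h - c k h j‖ * ∏ ℓ ∈ Finset.univ.erase j, ‖c k h ℓ‖)
        ≤ ‖α k‖ * ‖α h‖ * (ε * M) := mul_le_mul_of_nonneg_left hEbound
          (mul_nonneg (norm_nonneg _) (norm_nonneg _))
      _ = ε * M * (‖α k‖ * ‖α h‖) := by ring
  have hsum_off : (∑ k, ∑ h ∈ Finset.univ.erase k, ‖α k‖ * ‖α h‖)
      ≤ Real.sqrt ((r:ℝ) * ((r:ℝ) - 1)) * S2 := by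
    have e1 : ∀ k : Fin r, (∑ h ∈ Finset.univ.erase k, ‖α k‖ * ‖α h‖)
        = ‖α k‖ * ((∑ h, ‖α h‖) - ‖α k‖) := by
      intro k
      rw [← Finset.mul_sum, Finset.sum_erase_eq_sub (Finset.mem_univ k)]
    simp_rw [e1]
    have expand : (∑ k, ‖α k‖ * ((∑ h, ‖α h‖) - ‖α k‖))
        = (∑ k, ‖α k‖) * (∑ k, ‖α k‖) - S2 := by
      rw [hS2def]
      simp_rw [mul_sub]
      rw [Finset.sum_sub_distrib, ← Finset.sum_mul]
      congr 1
      exact Finset.sum_congr rfl fun k _ => (sq (‖α k‖)).symm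
    rw [expand]
    have hCS : (∑ k, ‖α k‖) * (∑ k, ‖α k‖) ≤ (r:ℝ) * S2 := by
      have h := sq_sum_le_card_mul_sum_sq (s := (Finset.univ : Finset (Fin r)))
        (f := fun k => ‖α k‖)
      rw [Finset.card_univ, Fintype.card_fin] at h
      calc (∑ k, ‖α k‖) * (∑ k, ‖α k‖) = (∑ k, ‖α k‖)^2 := (sq _).symm
        _ ≤ (r:ℝ) * ∑ k, ‖α k‖^2 := h
        _ = (r:ℝ) * S2 := by rw [hS2def]
    have hr1 : ((r:ℝ) - 1) ≤ Real.sqrt ((r:ℝ) * ((r:ℝ) - 1)) := by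
      rcases Nat.eq_zero_or_pos r with h0 | hpos
      · subst h0
        simp only [Nat.cast_zero]
        have := Real.sqrt_nonneg ((0:ℝ) * ((0:ℝ) - 1))
        linarith
      · have h1 : (1:ℝ) ≤ (r:ℝ) := by exact_mod_cast hpos
        have hsq : ((r:ℝ) - 1) = Real.sqrt (((r:ℝ) - 1)^2) :=
          (Real.sqrt_sq (by linarith)).symm
        rw [hsq]
        apply Real.sqrt_le_sqrt
        nlinarith
    calc (∑ k, ‖α k‖) * (∑ k, ‖α k‖) - S2 ≤ (r:ℝ) * S2 - S2 := by linarith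
      _ = ((r:ℝ) - 1) * S2 := by ring
      _ ≤ Real.sqrt ((r:ℝ) * ((r:ℝ) - 1)) * S2 := mul_le_mul_of_nonneg_right hr1 hS2nn
  have hsqrt_nn : 0 ≤ Real.sqrt ((r:ℝ) * ((r:ℝ) - 1)) := Real.sqrt_nonneg _
  have goal1 : |tnsq (modeProd j (cpTensor α y) A) - tnsq (cpTensor α y)|
      ≤ ε * (1 + Real.sqrt ((r:ℝ) * ((r:ℝ) - 1)) * M) * S2 := by
    calc |tnsq (modeProd j (cpTensor α y) A) - tnsq (cpTensor α y)|
        ≤ ∑ k, ∑ h, E k h := habs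
      _ = (∑ k, E k k) + ∑ k, ∑ h ∈ Finset.univ.erase k, E k h := hsplit
      _ ≤ (ε/4) * S2 + ε * M * (Real.sqrt ((r:ℝ) * ((r:ℝ) - 1)) * S2) := by
          refine add_le_add hdiag_bound (hoff_bound.trans ?_)
          exact mul_le_mul_of_nonneg_left hsum_off
            (mul_nonneg (le_of_lt hε0) hMnn)
      _ ≤ ε * (1 + Real.sqrt ((r:ℝ) * ((r:ℝ) - 1)) * M) * S2 := by nlinarith
  -- second and third bounds
  have hd0 : 0 < d := j.pos
  have hne' : Nonempty (Fin d) := ⟨j⟩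
  set μ : ℝ := ⨆ ℓ, modeCoh y ℓ with hμdef
  have hμ_ge : ∀ ℓ, modeCoh y ℓ ≤ μ := by
    intro ℓ
    rw [hμdef]
    exact le_ciSup (Set.Finite.bddAbove (Set.finite_range _)) ℓ
  have hμnn : 0 ≤ μ := le_trans (hcoh_nn j) (hμ_ge j)
  have hμ_le1 : μ ≤ 1 := by
    rw [hμdef]
    exact Real.iSup_le (fun ℓ => hcoh_le1 ℓ) zero_le_one
  have hM_le : M ≤ μ ^ (d - 1) := by
    rw [hMdef]
    calc (∏ ℓ ∈ Finset.univ.erase j, modeCoh y ℓ)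
        ≤ ∏ ℓ ∈ Finset.univ.erase j, μ :=
          Finset.prod_le_prod (fun ℓ _ => hcoh_nn ℓ) (fun ℓ _ => hμ_ge ℓ)
      _ = μ ^ (Finset.univ.erase j).card := (Finset.prod_const μ)
      _ = μ ^ (d - 1) := by
          rw [Finset.card_erase_of_mem (Finset.mem_univ j), Finset.card_univ,
            Fintype.card_fin]
  have hμpow_nn : 0 ≤ μ ^ (d - 1) := pow_nonneg hμnn _
  have hsqrt_le : Real.sqrt ((r:ℝ) * ((r:ℝ) - 1)) ≤ (r:ℝ) := by
    have h1 : ((r:ℝ) * ((r:ℝ) - 1)) ≤ ((r:ℝ))^2 := by nlinarith [Nat.cast_nonneg (α := ℝ) r]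
    calc Real.sqrt ((r:ℝ) * ((r:ℝ) - 1)) ≤ Real.sqrt (((r:ℝ))^2) := Real.sqrt_le_sqrt h1
      _ = (r:ℝ) := Real.sqrt_sq (Nat.cast_nonneg r)
  have goal2 : ε * (1 + Real.sqrt ((r:ℝ) * ((r:ℝ) - 1)) * M) * S2
      ≤ ε * (1 + (r:ℝ) * μ ^ (d - 1)) * S2 := by
    have hmm : Real.sqrt ((r:ℝ) * ((r:ℝ) - 1)) * M ≤ (r:ℝ) * μ ^ (d - 1) :=
      mul_le_mul hsqrt_le hM_le hMnn (Nat.cast_nonneg r)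
    apply mul_le_mul_of_nonneg_right _ hS2nn
    exact mul_le_mul_of_nonneg_left (by linarith) (le_of_lt hε0)
  have goal3 : ε * (1 + (r:ℝ) * μ ^ (d - 1)) * S2 ≤ ε * ((r:ℝ) + 1) * S2 := by
    have hpow_le1 : μ ^ (d - 1) ≤ 1 := pow_le_one₀ hμnn hμ_le1
    have : (r:ℝ) * μ ^ (d - 1) ≤ (r:ℝ) := by
      calc (r:ℝ) * μ ^ (d - 1) ≤ (r:ℝ) * 1 :=
            mul_le_mul_of_nonneg_left hpow_le1 (Nat.cast_nonneg r)
        _ = (r:ℝ) := mul_one _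
    apply mul_le_mul_of_nonneg_right _ hS2nn
    exact mul_le_mul_of_nonneg_left (by linarith) (le_of_lt hε0)
  exact ⟨goal1, goal2, goal3⟩
end
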